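/- The formula ψ∞ is satisfiable in the product 2-frame (ω+1,>) × (ω,≠). In fact, in the model where p is true exactly at the points (n,n) for n < ω and q is true exactly at the points (n+1,n) for n < ω, ψ∞ holds at the point (ω,0). -/

import Mathlib

set_option linter.unusedVariables false

/-! ### Unimodal syntax -/

/-- Unimodal formulas: propositional variables, falsum, implication and one box.
Other Booleans and the diamond are defined from these. -/
inductive UForm : Type
  | var : ℕ → UForm
  | bot : UForm
  | imp : UForm → UForm → UForm
  | box : UForm → UForm

namespace UForm
def neg (φ : UForm) : UForm := imp φ bot
def dia (φ : UForm) : UForm := neg (box (neg φ))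
end UForm

/-! ### Bimodal syntax -/

/-- Bimodal formulas: propositional variables, falsum, implication and boxes `□0`, `□1`. -/
inductive BForm : Type
  | var : ℕ → BForm
  | bot : BForm
  | imp : BForm → BForm → BForm
  | box : Fin 2 → BForm → BForm

namespace BForm
def neg (φ : BForm) : BForm := imp φ bot
def top : BForm := neg bot
def and (φ ψ : BForm) : BForm := neg (imp φ (neg ψ))
def or (φ ψ : BForm) : BForm := imp (neg φ) ψ
def dia (i : Fin 2) (φ : BForm) : BForm := neg (box i (neg φ))

/-- Substitution of formulas for propositional variables. -/
def subst (s : ℕ → BForm) : BForm → BForm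
  | var n => s n
  | bot => bot
  | imp φ ψ => imp (subst s φ) (subst s ψ)
  | box i φ => box i (subst s φ)
end BForm

/-- Embedding of unimodal formulas into bimodal ones, reading the unimodal box as `□i`. -/
def UForm.embed (i : Fin 2) : UForm → BForm
  | var n => .var n
  | bot => .bot
  | imp φ ψ => .imp (embed i φ) (embed i ψ)
  | box φ => .box i (embed i φ)

/-! ### Frames and semantics -/

/-- A unimodal Kripke frame: a nonempty set with a binary relation. -/
structure Frame1 : Type 1 where
  W : Type
  ne : Nonempty W
  R : W → W → Prop

/-- Truth of a unimodal formula at a point of a model based on a unimodal frame. -/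
def UTruth (F : Frame1) (V : ℕ → F.W → Prop) : F.W → UForm → Prop
  | w, .var n => V n w
  | _, .bot => False
  | w, .imp φ ψ => UTruth F V w φ → UTruth F V w ψ
  | w, .box φ => ∀ v, F.R w v → UTruth F V v φ

/-- Validity of a unimodal formula in a unimodal frame. -/
def UValid (F : Frame1) (φ : UForm) : Prop := ∀ V w, UTruth F V w φ

/-- `F` is a frame for the set `L` of unimodal formulas. -/
def UFrameFor (F : Frame1) (L : Set UForm) : Prop := ∀ φ ∈ L, UValid F φ

/-- The unimodal logic determined by a class of unimodal frames. -/
def ULog (C : Set Frame1) : Set UForm := { φ | ∀ F ∈ C, UValid F φ }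

/-- The unimodal logic of a single unimodal frame. -/
def LogOf (F : Frame1) : Set UForm := { φ | UValid F φ }

/-- A 2-frame: a nonempty set with two binary relations `R 0` and `R 1`. -/
structure Frame2 : Type 1 where
  W : Type
  ne : Nonempty W
  R : Fin 2 → W → W → Prop

/-- Truth of a bimodal formula at a point of a model based on a 2-frame. -/
def BTruth (F : Frame2) (V : ℕ → F.W → Prop) : F.W → BForm → Prop
  | w, .var n => V n w
  | _, .bot => False
  | w, .imp φ ψ => BTruth F V w φ → BTruth F V w ψ
  | w, .box i φ => ∀ v, F.R i w v → BTruth F V v φ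

/-- Validity of a bimodal formula in a 2-frame. -/
def BValid (F : Frame2) (φ : BForm) : Prop := ∀ V w, BTruth F V w φ

/-- `F` is a frame for the set `L` of bimodal formulas. -/
def FrameFor (F : Frame2) (L : Set BForm) : Prop := ∀ φ ∈ L, BValid F φ

/-! ### Normal bimodal logics -/

/-- `φ` is a propositional tautology: it is true under every assignment of truth values
to formulas that respects `⊥` and `→` (so variables and boxed formulas act as atoms). -/
def BTaut (φ : BForm) : Prop :=
  ∀ v : BForm → Prop, (¬ v .bot) → (∀ a b, v (.imp a b) ↔ (v a → v b)) → v φ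

/-- A normal bimodal logic: contains all propositional tautologies and the K-axioms for
both boxes, and is closed under modus ponens, substitution and necessitation. -/
structure IsLogic (L : Set BForm) : Prop where
  taut : ∀ φ, BTaut φ → φ ∈ L
  kax : ∀ (i : Fin 2) (φ ψ : BForm),
    BForm.imp (.box i (.imp φ ψ)) (.imp (.box i φ) (.box i ψ)) ∈ L
  mp : ∀ φ ψ, BForm.imp φ ψ ∈ L → φ ∈ L → ψ ∈ L
  subst : ∀ φ s, φ ∈ L → BForm.subst s φ ∈ L
  nec : ∀ (i : Fin 2) (φ : BForm), φ ∈ L → BForm.box i φ ∈ L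

/-- The smallest normal bimodal logic containing a given set of bimodal formulas. -/
def SmallestLogic (S : Set BForm) : Set BForm := ⋂₀ { L : Set BForm | IsLogic L ∧ S ⊆ L }

/-- The fusion `L0 ⊕ L1`: the smallest normal bimodal logic containing `L0` (in `□0`)
and `L1` (in `□1`). -/
def Fusion (L0 L1 : Set UForm) : Set BForm :=
  SmallestLogic ((UForm.embed 0 '' L0) ∪ (UForm.embed 1 '' L1))

/-- Left commutativity axiom `□1□0 p → □0□1 p`. -/
def lcomAx : BForm := .imp (.box 1 (.box 0 (.var 0))) (.box 0 (.box 1 (.var 0)))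

/-- Right commutativity axiom `□0□1 p → □1□0 p`. -/
def rcomAx : BForm := .imp (.box 0 (.box 1 (.var 0))) (.box 1 (.box 0 (.var 0)))

/-- Confluence axiom `◇0□1 p → □1◇0 p`. -/
def confAx : BForm := .imp (.dia 0 (.box 1 (.var 0))) (.box 1 (.dia 0 (.var 0)))

/-- The commutator `[L0, L1]`: the smallest normal bimodal logic containing the fusion
together with the two commutativity axioms and the confluence axiom. -/
def Commutator (L0 L1 : Set UForm) : Set BForm :=
  SmallestLogic ((UForm.embed 0 '' L0) ∪ (UForm.embed 1 '' L1) ∪ {lcomAx, rcomAx, confAx})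

/-- `[L0, L1]^lcom`: the smallest normal bimodal logic containing the fusion together
with the left commutativity axiom only. -/
def CommutatorLcom (L0 L1 : Set UForm) : Set BForm :=
  SmallestLogic ((UForm.embed 0 '' L0) ∪ (UForm.embed 1 '' L1) ∪ {lcomAx})

/-- A normal bimodal logic has the finite model property if every bimodal formula not in
`L` fails at some point of a model based on a finite frame for `L`. -/
def HasFMP (L : Set BForm) : Prop :=
  ∀ φ, φ ∉ L → ∃ F : Frame2, Finite F.W ∧ FrameFor F L ∧ ∃ V w, ¬ BTruth F V w φ

/-! ### Products -/

/-- The product of two unimodal frames. -/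
def prodFrame (F0 F1 : Frame1) : Frame2 where
  W := F0.W × F1.W
  ne := F0.ne.elim fun a => F1.ne.elim fun b => ⟨(a, b)⟩
  R := fun i a b =>
    if i = 0 then F0.R a.1 b.1 ∧ a.2 = b.2 else F1.R a.2 b.2 ∧ a.1 = b.1

/-- The product logic `L0 × L1` of two (Kripke complete) unimodal logics: the set of
bimodal formulas valid in every product of a frame for `L0` with a frame for `L1`. -/
def ProdLogic (L0 L1 : Set UForm) : Set BForm :=
  { φ | ∀ F0 F1 : Frame1, UFrameFor F0 L0 → UFrameFor F1 L1 →
      BValid (prodFrame F0 F1) φ }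

/-! ### Relation properties and particular unimodal logics -/

/-- Weak connectedness. -/
def WeaklyConnected {W : Type*} (R : W → W → Prop) : Prop :=
  ∀ x y z, R x y → R x z → y = z ∨ R y z ∨ R z y

/-- Pseudo-transitivity. -/
def PseudoTransitive {W : Type*} (R : W → W → Prop) : Prop :=
  ∀ x y z, R x y → R y z → x = z ∨ R x z

/-- `K`: the unimodal logic determined by all frames. -/
def LogicK : Set UForm := ULog Set.univ

/-- `K3`: the unimodal logic determined by all weakly connected frames. -/
def LogicK3 : Set UForm := ULog { F | WeaklyConnected F.R }

/-- `K4.3`: the unimodal logic determined by all transitive weakly connected frames. -/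
def LogicK43 : Set UForm := ULog { F | Transitive F.R ∧ WeaklyConnected F.R }

/-- `S4.3`: the logic determined by all reflexive transitive weakly connected frames. -/
def LogicS43 : Set UForm :=
  ULog { F | Reflexive F.R ∧ Transitive F.R ∧ WeaklyConnected F.R }

/-- `S5`: the unimodal logic determined by all equivalence frames. -/
def LogicS5 : Set UForm := ULog { F | Equivalence F.R }

/-- `Diff`: the unimodal logic determined by all difference frames `(W, ≠)`. -/
def LogicDiff : Set UForm := ULog { F | ∀ a b, F.R a b ↔ a ≠ b }

/-- `K4⁻`: the unimodal logic determined by all pseudo-transitive frames. -/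
def LogicK4minus : Set UForm := ULog { F | PseudoTransitive F.R }

/-- The frame `(ω + 1, >)` on `{0, 1, 2, …, ω}`. -/
def omegaSuccGt : Frame1 := ⟨WithTop ℕ, ⟨⊤⟩, fun a b => b < a⟩

/-- The difference frame `(ω, ≠)`. -/
def omegaNeq : Frame1 := ⟨ℕ, ⟨0⟩, fun a b => a ≠ b⟩

/-- The frame `(ω, <)`. -/
def omegaLt : Frame1 := ⟨ℕ, ⟨0⟩, fun a b => a < b⟩

/-- The frame `(ω, ≤)`. -/
def omegaLe : Frame1 := ⟨ℕ, ⟨0⟩, fun a b => a ≤ b⟩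

/-- The frame `(ℚ, <)`. -/
def ratLt : Frame1 := ⟨ℚ, ⟨0⟩, fun a b => a < b⟩

/-- A unimodal frame is one-step rooted if some point sees every other point in one step. -/
def OneStepRooted (F : Frame1) : Prop := ∃ r : F.W, ∀ w : F.W, w ≠ r → F.R r w

/-- `F` contains an `(ω + 1, >)`-type chain: there are distinct points `x n` for `n ≤ ω`
such that for `n ≠ m`, `x n` is related to `x m` iff `n > m`. -/
def ContainsOmegaSuccChain (F : Frame1) : Prop :=
  ∃ x : WithTop ℕ → F.W, Function.Injective x ∧
    ∀ n m : WithTop ℕ, n ≠ m → (F.R (x n) (x m) ↔ m < n)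

/-- (lcom) for a 2-frame. -/
def Lcom (F : Frame2) : Prop :=
  ∀ x y z : F.W, F.R 0 x y → F.R 1 y z → ∃ u, F.R 1 x u ∧ F.R 0 u z

/-- (rcom) for a 2-frame. -/
def Rcom (F : Frame2) : Prop :=
  ∀ x y z : F.W, F.R 1 x y → F.R 0 y z → ∃ u, F.R 0 x u ∧ F.R 1 u z

/-- (conf) for a 2-frame. -/
def Conf (F : Frame2) : Prop :=
  ∀ x y z : F.W, F.R 1 x y → F.R 0 x z → ∃ u, F.R 0 y u ∧ F.R 1 z u

/-! ### The formula `ψ∞` -/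

/-- The propositional variable `p`. -/
def pV : BForm := .var 0

/-- The propositional variable `q`. -/
def qV : BForm := .var 1

/-- `□1⁺ψ = ψ ∧ □1ψ`. -/
def boxPlus1 (ψ : BForm) : BForm := .and ψ (.box 1 ψ)

/-- The formula `ψ∞`: the conjunction of
`◇0(p ∧ ¬q ∧ □0¬q ∧ □1¬q)`,
`□1⁺◇0(q ∧ □1¬q)`,
`□1⁺□0(q → ◇1(p ∧ ¬q ∧ □0¬q ∧ ◇1 q))`, and
`□1⁺□0□0(p → □0¬p)`. -/
def psiInf : BForm :=
  .and (.dia 0 (.and pV (.and (.neg qV) (.and (.box 0 (.neg qV)) (.box 1 (.neg qV))))))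
    (.and (boxPlus1 (.dia 0 (.and qV (.box 1 (.neg qV)))))
      (.and (boxPlus1 (.box 0 (.imp qV
          (.dia 1 (.and pV (.and (.neg qV) (.and (.box 0 (.neg qV)) (.dia 1 qV))))))))
        (boxPlus1 (.box 0 (.box 0 (.imp pV (.box 0 (.neg pV))))))))

/-!
In the model, `p` marks the diagonal `(n, n)` and `q` the points `(n + 1, n)` just above it,
so every column `n` contains exactly one `q`-point and no `q`-point lies at or below the
diagonal. Conjunct (1) is witnessed by `(0, 0)`, and (2) at `(ω, n)` by the `q`-point
`(n + 1, n)`. For (3), the only `q`-point below `(ω, n)` is `(n + 1, n)`; moving along `≠` to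
the diagonal point `(n + 1, n + 1)` gives a `p`-point with no `q`-point below it that still
sees `(n + 1, n)`. Conjunct (4) holds everywhere: below a diagonal point its column is off
the diagonal.
-/

section Semantics

variable {F : Frame2} {V : ℕ → F.W → Prop} {w : F.W} {φ ψ : BForm}

lemma BTruth_and : BTruth F V w (.and φ ψ) ↔ BTruth F V w φ ∧ BTruth F V w ψ := by
  simp only [BForm.and, BForm.neg, BTruth, Classical.not_imp, imp_false, not_not]

lemma BTruth_dia {i : Fin 2} : BTruth F V w (.dia i φ) ↔ ∃ v, F.R i w v ∧ BTruth F V v φ := by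
  simp only [BForm.dia, BForm.neg, BTruth, imp_false, not_forall, not_not, exists_prop]

end Semantics

namespace prodFrame

variable {F0 F1 : Frame1} {V : ℕ → (prodFrame F0 F1).W → Prop} {a : F0.W} {b : F1.W}
  {φ : BForm}

lemma BTruth_box_zero :
    BTruth (prodFrame F0 F1) V (a, b) (.box 0 φ) ↔
      ∀ a', F0.R a a' → BTruth (prodFrame F0 F1) V (a', b) φ :=
  ⟨fun h a' h' => h (a', b) ⟨h', rfl⟩, fun h _ ⟨h', hb⟩ => by subst hb; exact h _ h'⟩

lemma BTruth_box_one :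
    BTruth (prodFrame F0 F1) V (a, b) (.box 1 φ) ↔
      ∀ b', F1.R b b' → BTruth (prodFrame F0 F1) V (a, b') φ :=
  ⟨fun h b' h' => h (a, b') ⟨h', rfl⟩, fun h _ ⟨h', ha⟩ => by subst ha; exact h _ h'⟩

lemma BTruth_dia_zero :
    BTruth (prodFrame F0 F1) V (a, b) (.dia 0 φ) ↔
      ∃ a', F0.R a a' ∧ BTruth (prodFrame F0 F1) V (a', b) φ := by
  refine BTruth_dia.trans ⟨?_, ?_⟩
  · rintro ⟨⟨a', b'⟩, ⟨h, rfl⟩, hv⟩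
    exact ⟨a', h, hv⟩
  · rintro ⟨a', h, hv⟩
    exact ⟨(a', b), ⟨h, rfl⟩, hv⟩

lemma BTruth_dia_one :
    BTruth (prodFrame F0 F1) V (a, b) (.dia 1 φ) ↔
      ∃ b', F1.R b b' ∧ BTruth (prodFrame F0 F1) V (a, b') φ := by
  refine BTruth_dia.trans ⟨?_, ?_⟩
  · rintro ⟨⟨a', b'⟩, ⟨h, rfl⟩, hv⟩
    exact ⟨b', h, hv⟩
  · rintro ⟨b', h, hv⟩
    exact ⟨(a, b'), ⟨h, rfl⟩, hv⟩

lemma BTruth_boxPlus1_of_forall (h : ∀ b', BTruth (prodFrame F0 F1) V (a, b') φ) :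
    BTruth (prodFrame F0 F1) V (a, b) (boxPlus1 φ) :=
  BTruth_and.2 ⟨h b, BTruth_box_one.2 fun b' _ => h b'⟩

end prodFrame

def psiInf₁ : BForm :=
  .dia 0 (.and pV (.and (.neg qV) (.and (.box 0 (.neg qV)) (.box 1 (.neg qV)))))

def psiInf₂ : BForm := .dia 0 (.and qV (.box 1 (.neg qV)))

def psiInf₃ : BForm :=
  .box 0 (.imp qV (.dia 1 (.and pV (.and (.neg qV) (.and (.box 0 (.neg qV)) (.dia 1 qV))))))

def psiInf₄ : BForm := .box 0 (.box 0 (.imp pV (.box 0 (.neg pV))))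

lemma psiInf_eq :
    psiInf = .and psiInf₁ (.and (boxPlus1 psiInf₂) (.and (boxPlus1 psiInf₃) (boxPlus1 psiInf₄))) :=
  rfl

local notation "𝔉" => prodFrame omegaSuccGt omegaNeq

structure IsPsiInfValuation (V : ℕ → (𝔉).W → Prop) : Prop where
  p_iff : ∀ (m : WithTop ℕ) (n : ℕ), V 0 (m, n) ↔ m = n
  q_iff : ∀ (m : WithTop ℕ) (n : ℕ), V 1 (m, n) ↔ m = ((n + 1 : ℕ) : WithTop ℕ)

namespace IsPsiInfValuation

open prodFrame

variable {V : ℕ → (𝔉).W → Prop}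

lemma not_q_of_le (hV : IsPsiInfValuation V) {m : WithTop ℕ} {n : ℕ} (h : m ≤ n) :
    ¬V 1 (m, n) := by
  rw [hV.q_iff m n]
  rintro rfl
  exact absurd (Nat.cast_le.1 h) (by omega)

lemma not_q_of_ne (hV : IsPsiInfValuation V) {n k : ℕ} (h : k ≠ n) :
    ¬V 1 (((n + 1 : ℕ) : WithTop ℕ), k) := by
  rw [hV.q_iff _ k, Nat.cast_inj]
  omega

lemma psiInf₁_top (hV : IsPsiInfValuation V) :
    BTruth 𝔉 V ((⊤ : WithTop ℕ), (0 : ℕ)) psiInf₁ := by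
  refine BTruth_dia_zero.2 ⟨((0 : ℕ) : WithTop ℕ), WithTop.coe_lt_top 0, ?_⟩
  refine BTruth_and.2 ⟨(hV.p_iff _ _).2 rfl, BTruth_and.2 ⟨hV.not_q_of_le le_rfl, ?_⟩⟩
  refine BTruth_and.2 ⟨BTruth_box_zero.2 fun m hm => hV.not_q_of_le hm.le, ?_⟩
  exact BTruth_box_one.2 fun k _ => hV.not_q_of_le (Nat.cast_le.2 k.zero_le)

lemma psiInf₂_top (hV : IsPsiInfValuation V) (n : ℕ) :
    BTruth 𝔉 V ((⊤ : WithTop ℕ), n) psiInf₂ :=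
  BTruth_dia_zero.2 ⟨((n + 1 : ℕ) : WithTop ℕ), WithTop.coe_lt_top _,
    BTruth_and.2 ⟨(hV.q_iff _ _).2 rfl,
      BTruth_box_one.2 fun _ hk => hV.not_q_of_ne (Ne.symm hk)⟩⟩

lemma psiInf₃_top (hV : IsPsiInfValuation V) (n : ℕ) :
    BTruth 𝔉 V ((⊤ : WithTop ℕ), n) psiInf₃ := by
  refine BTruth_box_zero.2 fun m _ hq => ?_
  obtain rfl : m = ((n + 1 : ℕ) : WithTop ℕ) := (hV.q_iff m n).1 hq
  refine BTruth_dia_one.2 ⟨n + 1, show n ≠ n + 1 by omega,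
    BTruth_and.2 ⟨(hV.p_iff _ _).2 rfl, ?_⟩⟩
  refine BTruth_and.2 ⟨hV.not_q_of_le le_rfl, BTruth_and.2 ⟨?_, ?_⟩⟩
  · exact BTruth_box_zero.2 fun _ hm => hV.not_q_of_le hm.le
  · exact BTruth_dia_one.2 ⟨n, show n + 1 ≠ n by omega, (hV.q_iff _ _).2 rfl⟩

lemma psiInf₄_everywhere (hV : IsPsiInfValuation V) (a : WithTop ℕ) (b : ℕ) :
    BTruth 𝔉 V (a, b) psiInf₄ := by
  refine BTruth_box_zero.2 fun _ _ => BTruth_box_zero.2 fun c _ hp => ?_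
  refine BTruth_box_zero.2 fun d hdc hp' => ?_
  rw [(hV.p_iff c b).1 hp] at hdc
  exact hdc.ne ((hV.p_iff d b).1 hp')

lemma psiInf_top (hV : IsPsiInfValuation V) :
    BTruth 𝔉 V ((⊤ : WithTop ℕ), (0 : ℕ)) psiInf := by
  rw [psiInf_eq]
  exact BTruth_and.2 ⟨hV.psiInf₁_top, BTruth_and.2 ⟨BTruth_boxPlus1_of_forall hV.psiInf₂_top,
    BTruth_and.2 ⟨BTruth_boxPlus1_of_forall hV.psiInf₃_top,
      BTruth_boxPlus1_of_forall (hV.psiInf₄_everywhere ⊤)⟩⟩⟩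

end IsPsiInfValuation

def psiInfVal (i : ℕ) (w : WithTop ℕ × ℕ) : Prop := w.1 = ((w.2 + i : ℕ) : WithTop ℕ)

lemma isPsiInfValuation_psiInfVal : IsPsiInfValuation psiInfVal :=
  ⟨fun _ _ => Iff.rfl, fun _ _ => Iff.rfl⟩

/-- **Lemma 6.** `ψ∞` is satisfiable in `(ω+1, >) × (ω, ≠)`; in fact, under any
valuation making `p` true exactly at the points `(n, n)` and `q` true exactly at the
points `(n+1, n)` for `n < ω`, the formula `ψ∞` holds at `(ω, 0)`. -/
theorem psiInf_sat_in_product :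
    (∃ V w, BTruth (prodFrame omegaSuccGt omegaNeq) V w psiInf) ∧
    ∀ V : ℕ → (prodFrame omegaSuccGt omegaNeq).W → Prop,
      (∀ (m : WithTop ℕ) (n : ℕ), V 0 (m, n) ↔ m = (n : WithTop ℕ)) →
      (∀ (m : WithTop ℕ) (n : ℕ), V 1 (m, n) ↔ m = ((n + 1 : ℕ) : WithTop ℕ)) →
      BTruth (prodFrame omegaSuccGt omegaNeq) V ((⊤ : WithTop ℕ), (0 : ℕ)) psiInf :=
  ⟨⟨psiInfVal, _, isPsiInfValuation_psiInfVal.psiInf_top⟩,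
    fun _ hp hq => IsPsiInfValuation.psiInf_top ⟨hp, hq⟩⟩
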